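/- arXiv:0902.4415 — 7 statements merged into one kernel-verified Lean document; each statement's English description precedes it below -/
import Mathlib

section
/- Let H be a real Hilbert space, let A : H → 2^H be maximal monotone, let x ∈ H, and let 0 < γ ≤ μ. Then ‖J_{γA} x − x‖ ≤ 2 ‖J_{μA} x − x‖. -/
/-
Write `a = x - J_γ x` and `b = x - J_μ x`, so that `a / γ ∈ A (J_γ x)` and `b / μ ∈ A (J_μ x)`.
Monotonicity of `A` at these two graph points gives
`‖a‖² / γ + ‖b‖² / μ ≤ (1 / γ + 1 / μ) ⟪a, b⟫`; dropping the `b`-term and applying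
Cauchy–Schwarz leaves `‖a‖² ≤ (1 + γ / μ) ‖a‖ ‖b‖ ≤ 2 ‖a‖ ‖b‖`.
-/

open scoped RealInnerProductSpace

/-- A set-valued operator `A : H → 2^H` is monotone if
`⟨x − y, u − v⟩ ≥ 0` for all `(x,u), (y,v)` in its graph. -/
def IsMonotoneOp {H : Type*} [NormedAddCommGroup H] [InnerProductSpace ℝ H]
    (A : H → Set H) : Prop :=
  ∀ x y u v : H, u ∈ A x → v ∈ A y → 0 ≤ ⟪x - y, u - v⟫

/-- A monotone operator is maximal monotone if its graph is not properly
contained in the graph of another monotone operator. -/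
def IsMaximalMonotone {H : Type*} [NormedAddCommGroup H] [InnerProductSpace ℝ H]
    (A : H → Set H) : Prop :=
  IsMonotoneOp A ∧
    ∀ B : H → Set H, IsMonotoneOp B → (∀ x, A x ⊆ B x) → ∀ x, B x = A x

/-- `J` is the resolvent `(Id + γ A)⁻¹` of `A` with index `γ`: for every `y`,
`γ⁻¹ (y − J y) ∈ A (J y)`. -/
def IsResolvent {H : Type*} [NormedAddCommGroup H] [InnerProductSpace ℝ H]
    (A : H → Set H) (γ : ℝ) (J : H → H) : Prop :=
  ∀ y : H, γ⁻¹ • (y - J y) ∈ A (J y)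

section

variable {H : Type*} [NormedAddCommGroup H] [InnerProductSpace ℝ H]

theorem IsMonotoneOp.resolvent_norm_sq_add_le_inner {A : H → Set H} (hA : IsMonotoneOp A)
    {γ μ : ℝ} {Jγ Jμ : H → H} (hJγ : IsResolvent A γ Jγ) (hJμ : IsResolvent A μ Jμ) (x : H) :
    γ⁻¹ * ‖x - Jγ x‖ ^ 2 + μ⁻¹ * ‖x - Jμ x‖ ^ 2 ≤ (γ⁻¹ + μ⁻¹) * ⟪x - Jγ x, x - Jμ x⟫ := by
  have hmono := hA _ _ _ _ (hJγ x) (hJμ x)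
  rw [show Jγ x - Jμ x = (x - Jμ x) - (x - Jγ x) by abel] at hmono
  generalize x - Jγ x = a at hmono ⊢
  generalize x - Jμ x = b at hmono ⊢
  simp only [inner_sub_left, inner_sub_right, real_inner_smul_right,
    real_inner_self_eq_norm_sq, real_inner_comm a b] at hmono
  linarith

theorem norm_le_two_mul_of_norm_sq_add_le_inner {a b : H} {s t : ℝ} (hs : 0 < s) (hst : s ≤ t)
    (h : t * ‖a‖ ^ 2 + s * ‖b‖ ^ 2 ≤ (t + s) * ⟪a, b⟫) :
    ‖a‖ ≤ 2 * ‖b‖ := by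
  have ht : 0 < t := hs.trans_le hst
  have hsq : t * ‖a‖ ^ 2 ≤ t * (2 * ‖a‖ * ‖b‖) :=
    calc t * ‖a‖ ^ 2 ≤ (t + s) * ⟪a, b⟫ := by nlinarith
      _ ≤ (t + s) * (‖a‖ * ‖b‖) := by gcongr; exact real_inner_le_norm a b
      _ ≤ (t + t) * (‖a‖ * ‖b‖) := by gcongr
      _ = t * (2 * ‖a‖ * ‖b‖) := by ring
  nlinarith [le_of_mul_le_mul_left hsq ht, norm_nonneg a, norm_nonneg b]

end

theorem resolvent_shift_norm_le_general {H : Type*} [NormedAddCommGroup H]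
    [InnerProductSpace ℝ H]
    (A : H → Set H) (hA : IsMaximalMonotone A)
    (γ μ : ℝ) (hγ : 0 < γ) (hγμ : γ ≤ μ)
    (Jγ Jμ : H → H) (hJγ : IsResolvent A γ Jγ) (hJμ : IsResolvent A μ Jμ)
    (x : H) :
    ‖Jγ x - x‖ ≤ 2 * ‖Jμ x - x‖ := by
  rw [norm_sub_rev, norm_sub_rev (Jμ x)]
  exact norm_le_two_mul_of_norm_sq_add_le_inner (inv_pos.mpr (hγ.trans_le hγμ))
    (inv_anti₀ hγ hγμ) (hA.1.resolvent_norm_sq_add_le_inner hJγ hJμ x)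

/-- Lemma 2.7(ii): if `0 < γ ≤ μ`, then `‖J_{γA} x − x‖ ≤ 2 ‖J_{μA} x − x‖`. -/
theorem resolvent_shift_norm_le {H : Type*} [NormedAddCommGroup H]
    [InnerProductSpace ℝ H] [CompleteSpace H]
    (A : H → Set H) (hA : IsMaximalMonotone A)
    (γ μ : ℝ) (hγ : 0 < γ) (hγμ : γ ≤ μ)
    (Jγ Jμ : H → H) (hJγ : IsResolvent A γ Jγ) (hJμ : IsResolvent A μ Jμ)
    (x : H) :
    ‖Jγ x - x‖ ≤ 2 * ‖Jμ x - x‖ :=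
  resolvent_shift_norm_le_general A hA γ μ hγ hγμ Jγ Jμ hJγ hJμ x
end

section
/- Let H be a real Hilbert space, let A : H → 2^H be maximal monotone, let x ∈ H, and let γ, μ > 0. Then ‖J_{γ(^μA)} x − J_{γA} x‖ ≤ (2μ/(γ+μ)) ‖J_{γA} x − x‖, where ^μA denotes the Yosida approximation of A of index μ. -/
open scoped RealInnerProductSpace
open Pointwise

/-
With `p = J_{γ(^μA)} x` and `q = J_{γA} x`, the resolvent equation of the Yosida approximation says
that `γ⁻¹ (x - p) ∈ A (J_{μA} p)` with `J_{μA} p = p - (μ/γ) (x - p)`. Testing monotonicity of `A`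
at this point against `(q, γ⁻¹ (x - q))` gives `(γ + μ) ‖p - q‖² ≤ μ ⟪x - q, p - q⟫`, hence by
Cauchy–Schwarz the sharper bound `‖p - q‖ ≤ μ / (γ + μ) ‖q - x‖`.
-/

section

variable {H : Type*} [NormedAddCommGroup H] [InnerProductSpace ℝ H]

theorem mul_norm_le_of_mul_sq_le_inner {a b : H} {c μ : ℝ} (hμ : 0 ≤ μ)
    (h : c * ‖a‖ ^ 2 ≤ μ * ⟪b, a⟫) : c * ‖a‖ ≤ μ * ‖b‖ := by
  rcases (norm_nonneg a).eq_or_lt with ha | ha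
  · rw [← ha, mul_zero]
    positivity
  · refine le_of_mul_le_mul_right ?_ ha
    calc c * ‖a‖ * ‖a‖ = c * ‖a‖ ^ 2 := by ring
      _ ≤ μ * ⟪b, a⟫ := h
      _ ≤ μ * (‖b‖ * ‖a‖) := mul_le_mul_of_nonneg_left (real_inner_le_norm b a) hμ
      _ = μ * ‖b‖ * ‖a‖ := by ring

namespace IsResolvent

variable {A : H → Set H} {γ : ℝ} {J : H → H}

/-- `(y, γ⁻¹ z) ∈ gra A` is `(y, z) ∈ gra (γA)`, so this is monotonicity of `γA`. -/
theorem inner_nonneg_of_mem (hJ : IsResolvent A γ J) (hA : IsMonotoneOp A) (hγ : 0 < γ)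
    (x : H) {y z : H} (hz : γ⁻¹ • z ∈ A y) : 0 ≤ ⟪J x - y, x - J x - z⟫ := by
  have h := hA _ _ _ _ (hJ x) hz
  rwa [← smul_sub, real_inner_smul_right, mul_nonneg_iff_of_pos_left (inv_pos.2 hγ)] at h

theorem add_mul_norm_yosida_sub_le {μ : ℝ} {Jγ Jμ JY : H → H} (hA : IsMonotoneOp A)
    (hγ : 0 < γ) (hμ : 0 < μ) (hJγ : IsResolvent A γ Jγ) (hJμ : IsResolvent A μ Jμ)
    (hJY : IsResolvent (fun w => ({μ⁻¹ • (w - Jμ w)} : Set H)) γ JY) (x : H) :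
    (γ + μ) * ‖JY x - Jγ x‖ ≤ μ * ‖Jγ x - x‖ := by
  set p := JY x
  set q := Jγ x
  have hY : μ⁻¹ • (p - Jμ p) = γ⁻¹ • (x - p) := (hJY x).symm
  have hmem : γ⁻¹ • (x - p) ∈ A (Jμ p) := hY ▸ hJμ p
  have hr : Jμ p = p - (μ / γ) • (x - p) := by
    rw [div_eq_mul_inv, mul_smul, ← hY, smul_inv_smul₀ hμ.ne', sub_sub_cancel]
  have hmono : 0 ≤ ⟪q - Jμ p, p - q⟫ := by
    simpa only [sub_sub_sub_cancel_left] using hJγ.inner_nonneg_of_mem hA hγ x hmem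
  have hsplit : q - Jμ p = γ⁻¹ • (μ • (x - q) - (γ + μ) • (p - q)) := by
    rw [hr]
    match_scalars <;> field_simp <;> ring
  have key : (γ + μ) * ‖p - q‖ ^ 2 ≤ μ * ⟪x - q, p - q⟫ := by
    rw [hsplit, real_inner_smul_left, mul_nonneg_iff_of_pos_left (inv_pos.2 hγ), inner_sub_left,
      real_inner_smul_left, real_inner_smul_left, real_inner_self_eq_norm_sq] at hmono
    linarith
  rw [norm_sub_rev q x]
  exact mul_norm_le_of_mul_sq_le_inner hμ.le key

end IsResolvent

end

theorem resolvent_yosida_dist_general {H : Type*} [NormedAddCommGroup H]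
    [InnerProductSpace ℝ H]
    (A : H → Set H) (hA : IsMaximalMonotone A)
    (γ μ : ℝ) (hγ : 0 < γ) (hμ : 0 < μ)
    (Jγ : H → H) (hJγ : IsResolvent A γ Jγ)
    (Jμ : H → H) (hJμ : IsResolvent A μ Jμ)
    -- `JY` is the resolvent of index `γ` of the Yosida approximation
    -- `^μA : w ↦ μ⁻¹ • (w − J_{μA} w)`
    (JY : H → H)
    (hJY : IsResolvent (fun w => ({μ⁻¹ • (w - Jμ w)} : Set H)) γ JY)
    (x : H) :
    ‖JY x - Jγ x‖ ≤ (2 * μ / (γ + μ)) * ‖Jγ x - x‖ := by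
  have hsum : 0 < γ + μ := by linarith
  calc ‖JY x - Jγ x‖ ≤ μ / (γ + μ) * ‖Jγ x - x‖ := by
        rw [div_mul_eq_mul_div, le_div_iff₀ hsum, mul_comm]
        exact IsResolvent.add_mul_norm_yosida_sub_le hA.1 hγ hμ hJγ hJμ hJY x
    _ ≤ 2 * μ / (γ + μ) * ‖Jγ x - x‖ := by
        gcongr
        linarith

/-- Lemma 2.7(iv): `‖J_{γ(^μA)} x − J_{γA} x‖ ≤ (2μ/(γ+μ)) ‖J_{γA} x − x‖`,
where `^μA = (Id − J_{μA})/μ` is the Yosida approximation of `A` of index `μ`. -/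
theorem resolvent_yosida_dist {H : Type*} [NormedAddCommGroup H]
    [InnerProductSpace ℝ H] [CompleteSpace H]
    (A : H → Set H) (hA : IsMaximalMonotone A)
    (γ μ : ℝ) (hγ : 0 < γ) (hμ : 0 < μ)
    (Jγ : H → H) (hJγ : IsResolvent A γ Jγ)
    (Jμ : H → H) (hJμ : IsResolvent A μ Jμ)
    -- `JY` is the resolvent of index `γ` of the Yosida approximation
    -- `^μA : w ↦ μ⁻¹ • (w − J_{μA} w)`
    (JY : H → H)
    (hJY : IsResolvent (fun w => ({μ⁻¹ • (w - Jμ w)} : Set H)) γ JY)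
    (x : H) :
    ‖JY x - Jγ x‖ ≤ (2 * μ / (γ + μ)) * ‖Jγ x - x‖ :=
  resolvent_yosida_dist_general A hA γ μ hγ hμ Jγ hJγ Jμ hJμ JY hJY x
end

section
/- Let H be a real Hilbert space, let A : H → 2^H be maximal monotone, let ε ∈ (0, 2β) and β > 0, and let (γ_n) be a sequence in [ε, 2β−ε]. Suppose (γ'_n) is a sequence in (0, 2β) with Σ_n |γ'_n − γ_n| < +∞, and set A_n = (γ'_n/γ_n) A for each n. Then for every ρ > 0, Σ_{n∈ℕ} sup_{‖y‖≤ρ} ‖J_{γ_n A_n} y − J_{γ_n A} y‖ < +∞. -/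
open scoped RealInnerProductSpace
open Pointwise

theorem norm_le_norm_of_sq_le_inner {H : Type*} [NormedAddCommGroup H] [InnerProductSpace ℝ H]
    {a b : H} (h : ‖a‖ ^ 2 ≤ ⟪a, b⟫) : ‖a‖ ≤ ‖b‖ := by
  have hab : ‖a‖ * ‖a‖ ≤ ‖a‖ * ‖b‖ := by nlinarith [real_inner_le_norm a b]
  rcases (norm_nonneg a).eq_or_lt with ha | ha
  · rw [← ha]
    exact norm_nonneg b
  · exact le_of_mul_le_mul_left hab ha

theorem IsResolvent.of_smul {H : Type*} [NormedAddCommGroup H] [InnerProductSpace ℝ H]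
    {A : H → Set H} {γ t : ℝ} {J : H → H} (ht : t ≠ 0)
    (hJ : IsResolvent (fun w => t • A w) γ J) : IsResolvent A (γ * t) J := by
  intro y
  have := (Set.mem_smul_set_iff_inv_smul_mem₀ ht _ _).mp (hJ y)
  rwa [smul_smul, ← mul_inv_rev] at this

namespace IsMonotoneOp

variable {H : Type*} [NormedAddCommGroup H] [InnerProductSpace ℝ H] {A : H → Set H}

/-- Nonexpansiveness of `J_{μA}` at `y` and `q + μ v`, which `J_{μA}` maps to `q`. -/
theorem norm_sub_le_of_resolvent (hA : IsMonotoneOp A) {μ : ℝ} (hμ : 0 < μ) {y p q v : H}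
    (hp : μ⁻¹ • (y - p) ∈ A p) (hv : v ∈ A q) : ‖p - q‖ ≤ ‖y - q - μ • v‖ := by
  apply norm_le_norm_of_sq_le_inner
  have hmono : 0 ≤ ⟪p - q, (y - p) - μ • v⟫ := by
    have h := mul_nonneg hμ.le (hA p q _ v hp hv)
    rwa [← real_inner_smul_right, smul_sub, smul_inv_smul₀ hμ.ne'] at h
  have hsplit : y - q - μ • v = (p - q) + ((y - p) - μ • v) := by abel
  rw [hsplit, inner_add_right, real_inner_self_eq_norm_sq]
  linarith

theorem norm_resolvent_sub_le (hA : IsMonotoneOp A) {μ lam : ℝ} (hμ : 0 < μ) (hlam : 0 < lam)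
    {J K : H → H} (hJ : IsResolvent A μ J) (hK : IsResolvent A lam K) (y : H) :
    ‖J y - K y‖ ≤ |μ - lam| / lam * ‖y - K y‖ := by
  have hcoef : y - K y - μ • lam⁻¹ • (y - K y) = (1 - μ / lam) • (y - K y) := by
    rw [smul_smul, sub_smul, one_smul, div_eq_mul_inv]
  have habs : |1 - μ / lam| = |μ - lam| / lam := by
    rw [one_sub_div hlam.ne', abs_div, abs_of_pos hlam, abs_sub_comm]
  calc ‖J y - K y‖ ≤ ‖y - K y - μ • lam⁻¹ • (y - K y)‖ :=
        hA.norm_sub_le_of_resolvent hμ (hJ y) (hK y)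
    _ = |μ - lam| / lam * ‖y - K y‖ := by rw [hcoef, norm_smul, Real.norm_eq_abs, habs]

theorem norm_sub_resolvent_le (hA : IsMonotoneOp A) {lam : ℝ} (hlam : 0 < lam) {K : H → H}
    (hK : IsResolvent A lam K) {x w : H} (hw : w ∈ A x) (y : H) :
    ‖y - K y‖ ≤ 2 * ‖y - x‖ + lam * ‖w‖ := by
  have hKx : ‖K y - x‖ ≤ ‖y - x‖ + lam * ‖w‖ := by
    calc ‖K y - x‖ ≤ ‖y - x - lam • w‖ := hA.norm_sub_le_of_resolvent hlam (hK y) hw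
      _ ≤ ‖y - x‖ + ‖lam • w‖ := norm_sub_le _ _
      _ = ‖y - x‖ + lam * ‖w‖ := by rw [norm_smul, Real.norm_of_nonneg hlam.le]
  calc ‖y - K y‖ ≤ ‖y - x‖ + ‖x - K y‖ := norm_sub_le_norm_sub_add_norm_sub _ _ _
    _ ≤ 2 * ‖y - x‖ + lam * ‖w‖ := by rw [norm_sub_rev x]; linarith

end IsMonotoneOp

theorem resolvent_approx_scaled_general {H : Type*} [NormedAddCommGroup H]
    [InnerProductSpace ℝ H]
    (A : H → Set H) (hA : IsMaximalMonotone A)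
    (β ε : ℝ) (hε : ε ∈ Set.Ioo (0 : ℝ) (2 * β))
    (γ : ℕ → ℝ) (hγ : ∀ n, γ n ∈ Set.Icc ε (2 * β - ε))
    (γ' : ℕ → ℝ) (hγ' : ∀ n, γ' n ∈ Set.Ioo (0 : ℝ) (2 * β))
    (hsum : Summable fun n => |γ' n - γ n|)
    -- `J n` is the resolvent of index `γ_n` of `A_n = (γ'_n/γ_n) • A`
    (J : ℕ → H → H)
    (hJ : ∀ n, IsResolvent (fun w => (γ' n / γ n) • A w) (γ n) (J n))
    -- `J₀ n` is the resolvent of index `γ_n` of `A`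
    (J₀ : ℕ → H → H) (hJ₀ : ∀ n, IsResolvent A (γ n) (J₀ n)) :
    ∀ ρ : ℝ, 0 < ρ → ∃ s : ℕ → ℝ, Summable s ∧
      ∀ n, ∀ y : H, ‖y‖ ≤ ρ → ‖J n y - J₀ n y‖ ≤ s n := by
  intro ρ _
  obtain ⟨hε₀, -⟩ := hε
  have hγpos n : 0 < γ n := hε₀.trans_le (hγ n).1
  have hJ' n : IsResolvent A (γ' n) (J n) := by
    simpa only [mul_div_cancel₀ _ (hγpos n).ne'] using
      (hJ n).of_smul (div_ne_zero (hγ' n).1.ne' (hγpos n).ne')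
  set x₀ := J₀ 0 0
  set w₀ := (γ 0)⁻¹ • (0 - x₀)
  set C := 2 * (ρ + ‖x₀‖) + (2 * β - ε) * ‖w₀‖
  refine ⟨fun n => |γ' n - γ n| / ε * C, (hsum.div_const ε).mul_right C, fun n y hy => ?_⟩
  have hyq : ‖y - J₀ n y‖ ≤ C := by
    have hyx : ‖y - x₀‖ ≤ ρ + ‖x₀‖ := (norm_sub_le _ _).trans (by linarith)
    have := hA.1.norm_sub_resolvent_le (hγpos n) (hJ₀ n) (hJ₀ 0 0) y
    have := mul_le_mul_of_nonneg_right (hγ n).2 (norm_nonneg w₀)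
    linarith
  calc ‖J n y - J₀ n y‖ ≤ |γ' n - γ n| / γ n * ‖y - J₀ n y‖ :=
        hA.1.norm_resolvent_sub_le (hγ' n).1 (hγpos n) (hJ' n) (hJ₀ n) y
    _ ≤ |γ' n - γ n| / ε * C := by
        gcongr
        exact (hγ n).1

/-- Proposition 2.8(i): if `A_n = (γ'_n/γ_n) A` with `Σ_n |γ'_n − γ_n| < ∞`,
then for every `ρ > 0` the series `Σ_n sup_{‖y‖≤ρ} ‖J_{γ_n A_n} y − J_{γ_n A} y‖`
converges. -/
theorem resolvent_approx_scaled {H : Type*} [NormedAddCommGroup H]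
    [InnerProductSpace ℝ H] [CompleteSpace H]
    (A : H → Set H) (hA : IsMaximalMonotone A)
    (β ε : ℝ) (hβ : 0 < β) (hε : ε ∈ Set.Ioo (0 : ℝ) (2 * β))
    (γ : ℕ → ℝ) (hγ : ∀ n, γ n ∈ Set.Icc ε (2 * β - ε))
    (γ' : ℕ → ℝ) (hγ' : ∀ n, γ' n ∈ Set.Ioo (0 : ℝ) (2 * β))
    (hsum : Summable fun n => |γ' n - γ n|)
    -- `J n` is the resolvent of index `γ_n` of `A_n = (γ'_n/γ_n) • A`
    (J : ℕ → H → H)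
    (hJ : ∀ n, IsResolvent (fun w => (γ' n / γ n) • A w) (γ n) (J n))
    -- `J₀ n` is the resolvent of index `γ_n` of `A`
    (J₀ : ℕ → H → H) (hJ₀ : ∀ n, IsResolvent A (γ n) (J₀ n)) :
    ∀ ρ : ℝ, 0 < ρ → ∃ s : ℕ → ℝ, Summable s ∧
      ∀ n, ∀ y : H, ‖y‖ ≤ ρ → ‖J n y - J₀ n y‖ ≤ s n :=
  resolvent_approx_scaled_general A hA β ε hε γ hγ γ' hγ' hsum J hJ J₀ hJ₀
end

section
/- Let H be a real Hilbert space, let A : H → 2^H be maximal monotone, let ε ∈ (0, 2β) and β > 0, and let (γ_n) be a sequence in [ε, 2β−ε]. Suppose (μ_n) is a sequence in (0, +∞) with Σ_n μ_n < +∞, and set A_n = ^{μ_n}A, the Yosida approximation of A of index μ_n. Then for every ρ > 0, Σ_{n∈ℕ} sup_{‖y‖≤ρ} ‖J_{γ_n A_n} y − J_{γ_n A} y‖ < +∞. -/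
open scoped RealInnerProductSpace
open Pointwise

/-!
Every estimate comes from one inequality: if `J` is a resolvent of `γ B` for a monotone `B`
and `u ∈ B x`, then `‖J y - x‖ ≤ ‖y - γ u - x‖`; so `J` is nonexpansive and maps `x + γ u`
to `x`. Writing `p = J_{γ A_n} y` and `r = J_{μ A} p`, the resolvent equation of `A_n` says
`γ⁻¹ (y - p) ∈ A r`, so the inequality for `J_{γ A}` gives `‖J_{γ A} y - r‖ ≤ ‖p - r‖`,
while `‖p - r‖ = (μ / γ) ‖y - p‖`. Since `‖^μA x‖ ≤ ‖u‖` for `u ∈ A x`, the same inequality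
for `A_n` bounds `‖y - p‖` uniformly in `n` on bounded sets, and the error is `O(μ_n)`.
-/

section

variable {H : Type*} [NormedAddCommGroup H] [InnerProductSpace ℝ H]
  {A B : H → Set H} {γ μ : ℝ} {J Jμ J₀ : H → H}

def yosidaApprox (μ : ℝ) (J : H → H) : H → Set H := fun w => {μ⁻¹ • (w - J w)}

theorem norm_le_of_inner_sub_nonneg {d w : H} (h : 0 ≤ ⟪d, w - d⟫) : ‖d‖ ≤ ‖w‖ := by
  rw [inner_sub_right, real_inner_self_eq_norm_mul_norm] at h
  have := real_inner_le_norm d w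
  nlinarith [norm_nonneg d, norm_nonneg w]

theorem IsResolvent.norm_sub_le_of_mem (hJ : IsResolvent B γ J) (hB : IsMonotoneOp B)
    (hγ : 0 < γ) {x u : H} (hu : u ∈ B x) (y : H) : ‖J y - x‖ ≤ ‖y - γ • u - x‖ := by
  apply norm_le_of_inner_sub_nonneg
  have key : y - γ • u - x - (J y - x) = γ • (γ⁻¹ • (y - J y) - u) := by
    rw [smul_sub, smul_inv_smul₀ hγ.ne']
    abel
  rw [key, real_inner_smul_right]
  exact mul_nonneg hγ.le (hB _ _ _ _ (hJ y) hu)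

theorem IsResolvent.norm_sub_le_norm_sub (hJ : IsResolvent B γ J) (hB : IsMonotoneOp B)
    (hγ : 0 < γ) (y y' : H) : ‖J y - J y'‖ ≤ ‖y - y'‖ := by
  simpa [smul_inv_smul₀ hγ.ne', sub_sub] using hJ.norm_sub_le_of_mem hB hγ (hJ y') y

theorem IsResolvent.norm_yosida_le (hJ : IsResolvent A μ J) (hA : IsMonotoneOp A) (hμ : 0 < μ)
    {x u : H} (hu : u ∈ A x) : ‖μ⁻¹ • (x - J x)‖ ≤ ‖u‖ := by
  have h := hJ.norm_sub_le_of_mem hA hμ hu x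
  rw [sub_sub_cancel_left, norm_neg, norm_smul, Real.norm_of_nonneg hμ.le] at h
  rw [norm_smul, norm_sub_rev, Real.norm_of_nonneg (inv_nonneg.2 hμ.le), inv_mul_le_iff₀ hμ]
  exact h

theorem IsMonotoneOp.yosidaApprox (hA : IsMonotoneOp A) (hJ : IsResolvent A μ J) (hμ : 0 < μ) :
    IsMonotoneOp (yosidaApprox μ J) := by
  rintro x y _ _ rfl rfl
  have hCS := real_inner_le_norm (x - y) (J x - J y)
  have hJ' := hJ.norm_sub_le_norm_sub hA hμ x y
  rw [← smul_sub, real_inner_smul_right, show x - J x - (y - J y) = x - y - (J x - J y) by abel,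
    inner_sub_right, real_inner_self_eq_norm_mul_norm]
  exact mul_nonneg (inv_nonneg.2 hμ.le) (by nlinarith [norm_nonneg (x - y)])

theorem IsResolvent.norm_sub_le_of_yosidaApprox
    (hJ : IsResolvent (yosidaApprox μ Jμ) γ J) (hA : IsMonotoneOp A) (hγ : 0 < γ)
    (hμ : 0 < μ) (hJμ : IsResolvent A μ Jμ) (hJ₀ : IsResolvent A γ J₀) (y : H) :
    ‖J y - J₀ y‖ ≤ 2 * (μ / γ) * ‖y - J y‖ := by
  set p := J y
  set r := Jμ p
  have hyosida : γ⁻¹ • (y - p) = μ⁻¹ • (p - r) := hJ y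
  have hgraph : γ⁻¹ • (y - p) ∈ A r := hyosida ▸ hJμ p
  have hpr : p - r = (μ / γ) • (y - p) := by
    rw [div_eq_mul_inv, mul_smul, hyosida, smul_inv_smul₀ hμ.ne']
  have hq : ‖J₀ y - r‖ ≤ ‖p - r‖ := by
    simpa [smul_inv_smul₀ hγ.ne'] using hJ₀.norm_sub_le_of_mem hA hγ hgraph y
  calc ‖p - J₀ y‖ ≤ ‖p - r‖ + ‖J₀ y - r‖ := by
        simpa only [norm_sub_rev r] using norm_sub_le_norm_sub_add_norm_sub p r (J₀ y)
    _ ≤ 2 * ‖p - r‖ := by linarith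
    _ = 2 * (μ / γ) * ‖y - p‖ := by
        rw [hpr, norm_smul, Real.norm_of_nonneg (by positivity), mul_assoc]

theorem IsResolvent.norm_sub_self_le_of_yosidaApprox
    (hJ : IsResolvent (yosidaApprox μ Jμ) γ J) (hA : IsMonotoneOp A) (hγ : 0 < γ)
    (hμ : 0 < μ) (hJμ : IsResolvent A μ Jμ) {x u : H} (hu : u ∈ A x) (y : H) :
    ‖y - J y‖ ≤ 2 * ‖y - x‖ + γ * ‖u‖ := by
  set v := μ⁻¹ • (x - Jμ x)
  have hv : ‖v‖ ≤ ‖u‖ := hJμ.norm_yosida_le hA hμ hu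
  have hv_mem : v ∈ yosidaApprox μ Jμ x := rfl
  have hJx := hJ.norm_sub_le_of_mem (hA.yosidaApprox hJμ hμ) hγ hv_mem y
  calc ‖y - J y‖ ≤ ‖y - x‖ + ‖J y - x‖ := by
        simpa only [norm_sub_rev x] using norm_sub_le_norm_sub_add_norm_sub y x (J y)
    _ ≤ ‖y - x‖ + (‖y - x‖ + γ * ‖v‖) := by
        grw [hJx, sub_right_comm, norm_sub_le (y - x), norm_smul, Real.norm_of_nonneg hγ.le]
    _ ≤ 2 * ‖y - x‖ + γ * ‖u‖ := by linarith [mul_le_mul_of_nonneg_left hv hγ.le]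

end

theorem resolvent_approx_yosida_general {H : Type*} [NormedAddCommGroup H]
    [InnerProductSpace ℝ H]
    (A : H → Set H) (hA : IsMaximalMonotone A)
    (β ε : ℝ) (hε : ε ∈ Set.Ioo (0 : ℝ) (2 * β))
    (γ : ℕ → ℝ) (hγ : ∀ n, γ n ∈ Set.Icc ε (2 * β - ε))
    (μ : ℕ → ℝ) (hμ : ∀ n, 0 < μ n) (hμsum : Summable μ)
    -- `Jμ n` is the resolvent of index `μ_n` of `A`
    (Jμ : ℕ → H → H) (hJμ : ∀ n, IsResolvent A (μ n) (Jμ n))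
    -- `J n` is the resolvent of index `γ_n` of the Yosida approximation
    -- `A_n = ^{μ_n}A : w ↦ (μ_n)⁻¹ • (w − J_{μ_n A} w)`
    (J : ℕ → H → H)
    (hJ : ∀ n, IsResolvent (fun w => ({(μ n)⁻¹ • (w - Jμ n w)} : Set H)) (γ n) (J n))
    -- `J₀ n` is the resolvent of index `γ_n` of `A`
    (J₀ : ℕ → H → H) (hJ₀ : ∀ n, IsResolvent A (γ n) (J₀ n)) :
    ∀ ρ : ℝ, 0 < ρ → ∃ s : ℕ → ℝ, Summable s ∧
      ∀ n, ∀ y : H, ‖y‖ ≤ ρ → ‖J n y - J₀ n y‖ ≤ s n := by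
  intro ρ _
  obtain ⟨hε, -⟩ := hε
  have hmono := hA.1
  have hγpos n : 0 < γ n := hε.trans_le (hγ n).1
  set x₀ := J₀ 0 0
  set u₀ := (γ 0)⁻¹ • (0 - x₀)
  have hu₀ : u₀ ∈ A x₀ := hJ₀ 0 0
  set C := 2 * (ρ + ‖x₀‖) + (2 * β - ε) * ‖u₀‖
  refine ⟨fun n => μ n * (2 / ε * C), hμsum.mul_right _, fun n y hy => ?_⟩
  have hbound : ‖y - J n y‖ ≤ C := by
    grw [(hJ n).norm_sub_self_le_of_yosidaApprox hmono (hγpos n) (hμ n) (hJμ n) hu₀ y,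
      norm_sub_le, hy, (hγ n).2]
  calc ‖J n y - J₀ n y‖ ≤ 2 * (μ n / γ n) * ‖y - J n y‖ :=
        (hJ n).norm_sub_le_of_yosidaApprox hmono (hγpos n) (hμ n) (hJμ n) (hJ₀ n) y
    _ ≤ 2 * (μ n / ε) * C := by
        have hμn := (hμ n).le
        gcongr
        exact (hγ n).1
    _ = μ n * (2 / ε * C) := by ring

/-- Proposition 2.8(ii): if `A_n = ^{μ_n}A` is the Yosida approximation of `A`
of index `μ_n` with `Σ_n μ_n < ∞`, then for every `ρ > 0` the series
`Σ_n sup_{‖y‖≤ρ} ‖J_{γ_n A_n} y − J_{γ_n A} y‖` converges. -/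
theorem resolvent_approx_yosida {H : Type*} [NormedAddCommGroup H]
    [InnerProductSpace ℝ H] [CompleteSpace H]
    (A : H → Set H) (hA : IsMaximalMonotone A)
    (β ε : ℝ) (hβ : 0 < β) (hε : ε ∈ Set.Ioo (0 : ℝ) (2 * β))
    (γ : ℕ → ℝ) (hγ : ∀ n, γ n ∈ Set.Icc ε (2 * β - ε))
    (μ : ℕ → ℝ) (hμ : ∀ n, 0 < μ n) (hμsum : Summable μ)
    -- `Jμ n` is the resolvent of index `μ_n` of `A`
    (Jμ : ℕ → H → H) (hJμ : ∀ n, IsResolvent A (μ n) (Jμ n))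
    -- `J n` is the resolvent of index `γ_n` of the Yosida approximation
    -- `A_n = ^{μ_n}A : w ↦ (μ_n)⁻¹ • (w − J_{μ_n A} w)`
    (J : ℕ → H → H)
    (hJ : ∀ n, IsResolvent (fun w => ({(μ n)⁻¹ • (w - Jμ n w)} : Set H)) (γ n) (J n))
    -- `J₀ n` is the resolvent of index `γ_n` of `A`
    (J₀ : ℕ → H → H) (hJ₀ : ∀ n, IsResolvent A (γ n) (J₀ n)) :
    ∀ ρ : ℝ, 0 < ρ → ∃ s : ℕ → ℝ, Summable s ∧
      ∀ n, ∀ y : H, ‖y‖ ≤ ρ → ‖J n y - J₀ n y‖ ≤ s n :=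
  resolvent_approx_yosida_general A hA β ε hε γ hγ μ hμ hμsum Jμ hJμ J hJ J₀ hJ₀
end

section
/- Let H be a real Hilbert space, let A : H → 2^H be maximal monotone, let (A_n) be a sequence of maximal monotone operators on H, and let γ > 0. Suppose that for every ϱ ≥ ‖J_{γA} 0‖ · max{1, 1/γ}, one has Σ_{n∈ℕ} haus_ϱ(A, A_n) < +∞, where haus_ϱ denotes the ϱ-Hausdorff distance between operators. Then for every ρ > 0, Σ_{n∈ℕ} sup_{‖y‖≤ρ} ‖J_{γ A_n} y − J_{γ A} y‖ < +∞. -/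
open scoped RealInnerProductSpace
open Pointwise

/-- Distance of `z ∈ H × H` to the graph of `A`, in the product Hilbert
space `H × H` (Euclidean product distance), valued in `ℝ≥0∞`. -/
noncomputable def graphDist {H : Type*} [NormedAddCommGroup H]
    [InnerProductSpace ℝ H] (A : H → Set H) (z : H × H) : ENNReal :=
  ⨅ (w : H × H) (_ : w.2 ∈ A w.1),
    ENNReal.ofReal (Real.sqrt (‖z.1 - w.1‖ ^ 2 + ‖z.2 - w.2‖ ^ 2))

/-- The `ϱ`-Hausdorff distance between the set-valued operators `A` and `B`:
`max { sup_{z ∈ E_ϱ ∩ gra B} d_{gra A}(z), sup_{z ∈ E_ϱ ∩ gra A} d_{gra B}(z) }`,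
where `E_ϱ = {(x,y) : max(‖x‖,‖y‖) ≤ ϱ}`. -/
noncomputable def hausDistOp {H : Type*} [NormedAddCommGroup H]
    [InnerProductSpace ℝ H] (ϱ : ℝ) (A B : H → Set H) : ENNReal :=
  max (⨆ (z : H × H) (_ : max ‖z.1‖ ‖z.2‖ ≤ ϱ ∧ z.2 ∈ B z.1), graphDist A z)
      (⨆ (z : H × H) (_ : max ‖z.1‖ ‖z.2‖ ≤ ϱ ∧ z.2 ∈ A z.1), graphDist B z)

/-!
Write `y = p + γ u` with `u = γ⁻¹ (y − J_{γA} y) ∈ A p`, `p = J_{γA} y`. Since resolvents of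
monotone operators are nonexpansive and `J_{γA_n}(x + γ v) = x` whenever `v ∈ A_n x`, any point
`(x, v)` of `gra A_n` gives `‖J_{γA_n} y − p‖ ≤ 2‖p − x‖ + γ‖u − v‖`, hence
`‖J_{γA_n} y − J_{γA} y‖ ≤ (2 + γ) d_{gra A_n}(p, u)`. For `‖y‖ ≤ ρ` the point `(p, u)` lies in a
fixed ball `E_ϱ`, so this is at most `(2 + γ) haus_ϱ(A, A_n)`, a summable bound.
-/

namespace IsMonotoneOp

variable {H : Type*} [NormedAddCommGroup H] [InnerProductSpace ℝ H]
  {A : H → Set H} {γ : ℝ} {J : H → H}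

theorem norm_sub_sq_le_inner_of_isResolvent (hA : IsMonotoneOp A) (hγ : 0 < γ)
    (hJ : IsResolvent A γ J) (a b : H) :
    ‖J a - J b‖ ^ 2 ≤ ⟪J a - J b, a - b⟫ := by
  have h := hA (J a) (J b) _ _ (hJ a) (hJ b)
  rw [← smul_sub, real_inner_smul_right, sub_sub_sub_comm, inner_sub_right,
    real_inner_self_eq_norm_sq] at h
  linarith [nonneg_of_mul_nonneg_right h (inv_pos.mpr hγ)]

theorem norm_sub_le_of_isResolvent (hA : IsMonotoneOp A) (hγ : 0 < γ)
    (hJ : IsResolvent A γ J) (a b : H) :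
    ‖J a - J b‖ ≤ ‖a - b‖ := by
  have h := (hA.norm_sub_sq_le_inner_of_isResolvent hγ hJ a b).trans (real_inner_le_norm _ _)
  nlinarith [norm_nonneg (J a - J b), norm_nonneg (a - b)]

theorem isResolvent_apply_add_smul (hA : IsMonotoneOp A) (hγ : 0 < γ)
    (hJ : IsResolvent A γ J) {x v : H} (hv : v ∈ A x) :
    J (x + γ • v) = x := by
  set z := J (x + γ • v)
  have h := hA z x _ v (hJ (x + γ • v)) hv
  have hdiff : γ⁻¹ • (x + γ • v - z) - v = -γ⁻¹ • (z - x) := by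
    rw [smul_sub, smul_add, smul_smul, inv_mul_cancel₀ hγ.ne', one_smul, neg_smul, smul_sub]
    abel
  rw [hdiff, real_inner_smul_right, real_inner_self_eq_norm_sq] at h
  have hz : ‖z - x‖ ^ 2 = 0 := by nlinarith [inv_pos.mpr hγ, sq_nonneg ‖z - x‖]
  simpa [sub_eq_zero] using hz

theorem norm_resolvent_sub_le_s7 (hA : IsMonotoneOp A) (hγ : 0 < γ)
    (hJ : IsResolvent A γ J) {x v : H} (hv : v ∈ A x) (p u : H) :
    ‖J (p + γ • u) - p‖ ≤ 2 * ‖p - x‖ + γ * ‖u - v‖ := by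
  have hsplit : p + γ • u - (x + γ • v) = (p - x) + γ • (u - v) := by
    rw [smul_sub]; abel
  calc ‖J (p + γ • u) - p‖
      ≤ ‖J (p + γ • u) - J (x + γ • v)‖ + ‖J (x + γ • v) - p‖ :=
        norm_sub_le_norm_sub_add_norm_sub _ _ _
    _ = ‖J (p + γ • u) - J (x + γ • v)‖ + ‖p - x‖ := by
        rw [hA.isResolvent_apply_add_smul hγ hJ hv, norm_sub_rev x p]
    _ ≤ ‖(p - x) + γ • (u - v)‖ + ‖p - x‖ := by
        rw [← hsplit]
        gcongr
        exact hA.norm_sub_le_of_isResolvent hγ hJ _ _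
    _ ≤ ‖p - x‖ + γ * ‖u - v‖ + ‖p - x‖ := by
        gcongr
        exact (norm_add_le _ _).trans_eq (by rw [norm_smul, Real.norm_of_nonneg hγ.le])
    _ = 2 * ‖p - x‖ + γ * ‖u - v‖ := by ring

theorem ofReal_norm_resolvent_sub_div_le_graphDist (hA : IsMonotoneOp A) (hγ : 0 < γ)
    (hJ : IsResolvent A γ J) (p u : H) :
    ENNReal.ofReal (‖J (p + γ • u) - p‖ / (2 + γ)) ≤ graphDist A (p, u) := by
  refine le_iInf₂ fun w hw => ENNReal.ofReal_le_ofReal ?_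
  have hle : ∀ a b : ℝ, 0 ≤ a → a ≤ √(a ^ 2 + b ^ 2) := fun a b ha =>
    (Real.le_sqrt ha (by positivity)).mpr (by nlinarith)
  rw [div_le_iff₀ (by linarith)]
  calc ‖J (p + γ • u) - p‖ ≤ 2 * ‖p - w.1‖ + γ * ‖u - w.2‖ :=
        hA.norm_resolvent_sub_le_s7 hγ hJ hw p u
    _ ≤ 2 * √(‖p - w.1‖ ^ 2 + ‖u - w.2‖ ^ 2) + γ * √(‖p - w.1‖ ^ 2 + ‖u - w.2‖ ^ 2) := by
        gcongr
        · exact hle _ _ (norm_nonneg _)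
        · rw [add_comm]; exact hle _ _ (norm_nonneg _)
    _ = _ := by ring

theorem max_norm_resolvent_graph_le (hA : IsMonotoneOp A) (hγ : 0 < γ)
    (hJ : IsResolvent A γ J) (y : H) :
    max ‖J y‖ ‖γ⁻¹ • (y - J y)‖ ≤ (1 + γ⁻¹) * (2 * ‖y‖ + ‖J 0‖) := by
  have hJy : ‖J y‖ ≤ ‖y‖ + ‖J 0‖ := by
    have := hA.norm_sub_le_of_isResolvent hγ hJ y 0
    rw [sub_zero] at this
    linarith [norm_le_norm_sub_add (J y) (J 0)]
  have hγ' := inv_pos.mpr hγ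
  have hsub : ‖γ⁻¹ • (y - J y)‖ ≤ γ⁻¹ * (2 * ‖y‖ + ‖J 0‖) := by
    rw [norm_smul, Real.norm_of_nonneg hγ'.le]
    gcongr
    linarith [norm_sub_le y (J y)]
  refine max_le ?_ ?_ <;> nlinarith [norm_nonneg y, norm_nonneg (J 0)]

end IsMonotoneOp

theorem graphDist_le_hausDistOp {H : Type*} [NormedAddCommGroup H] [InnerProductSpace ℝ H]
    {A B : H → Set H} {ϱ : ℝ} {z : H × H} (hz : max ‖z.1‖ ‖z.2‖ ≤ ϱ) (hzA : z.2 ∈ A z.1) :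
    graphDist B z ≤ hausDistOp ϱ A B :=
  (le_iSup₂ (f := fun (z : H × H) (_ : max ‖z.1‖ ‖z.2‖ ≤ ϱ ∧ z.2 ∈ A z.1) => graphDist B z)
    z ⟨hz, hzA⟩).trans (le_max_right _ _)

theorem resolvent_approx_haus_general {H : Type*} [NormedAddCommGroup H]
    [InnerProductSpace ℝ H]
    (A : H → Set H) (hA : IsMaximalMonotone A)
    (An : ℕ → H → Set H) (hAn : ∀ n, IsMaximalMonotone (An n))
    (γ : ℝ) (hγ : 0 < γ)
    (J₀ : H → H) (hJ₀ : IsResolvent A γ J₀)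
    (J : ℕ → H → H) (hJ : ∀ n, IsResolvent (An n) γ (J n))
    (hhaus : ∀ ϱ : ℝ, ‖J₀ 0‖ * max 1 (1 / γ) ≤ ϱ →
      (∑' n, hausDistOp ϱ A (An n)) < ⊤) :
    ∀ ρ : ℝ, 0 < ρ → ∃ s : ℕ → ℝ, Summable s ∧
      ∀ n, ∀ y : H, ‖y‖ ≤ ρ → ‖J n y - J₀ y‖ ≤ s n := by
  intro ρ _
  set ϱ := max (‖J₀ 0‖ * max 1 (1 / γ)) ((1 + γ⁻¹) * (2 * ρ + ‖J₀ 0‖))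
  have hsum := hhaus ϱ (le_max_left _ _)
  refine ⟨fun n => (2 + γ) * (hausDistOp ϱ A (An n)).toReal,
    (ENNReal.summable_toReal hsum.ne).mul_left _, fun n y hy => ?_⟩
  have hy_eq : J₀ y + γ • γ⁻¹ • (y - J₀ y) = y := by
    rw [smul_smul, mul_inv_cancel₀ hγ.ne', one_smul, add_sub_cancel]
  have hball : max ‖J₀ y‖ ‖γ⁻¹ • (y - J₀ y)‖ ≤ ϱ := by
    refine (hA.1.max_norm_resolvent_graph_le hγ hJ₀ y).trans (le_trans ?_ (le_max_right _ _))
    gcongr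
  have hbound := ((hAn n).1.ofReal_norm_resolvent_sub_div_le_graphDist hγ (hJ n) (J₀ y)
    (γ⁻¹ • (y - J₀ y))).trans (graphDist_le_hausDistOp hball (hJ₀ y))
  rw [hy_eq, ENNReal.ofReal_le_iff_le_toReal (ENNReal.ne_top_of_tsum_ne_top hsum.ne n),
    div_le_iff₀' (by linarith)] at hbound
  exact hbound

/-- Proposition 2.8(iii): if `Σ_n haus_ϱ(A, A_n) < ∞` for every
`ϱ ≥ ‖J_{γA} 0‖ max{1, 1/γ}`, then for every `ρ > 0` the series
`Σ_n sup_{‖y‖≤ρ} ‖J_{γ A_n} y − J_{γ A} y‖` converges. -/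
theorem resolvent_approx_haus {H : Type*} [NormedAddCommGroup H]
    [InnerProductSpace ℝ H] [CompleteSpace H]
    (A : H → Set H) (hA : IsMaximalMonotone A)
    (An : ℕ → H → Set H) (hAn : ∀ n, IsMaximalMonotone (An n))
    (γ : ℝ) (hγ : 0 < γ)
    (J₀ : H → H) (hJ₀ : IsResolvent A γ J₀)
    (J : ℕ → H → H) (hJ : ∀ n, IsResolvent (An n) γ (J n))
    (hhaus : ∀ ϱ : ℝ, ‖J₀ 0‖ * max 1 (1 / γ) ≤ ϱ →
      (∑' n, hausDistOp ϱ A (An n)) < ⊤) :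
    ∀ ρ : ℝ, 0 < ρ → ∃ s : ℕ → ℝ, Summable s ∧
      ∀ n, ∀ y : H, ‖y‖ ≤ ρ → ‖J n y - J₀ y‖ ≤ s n :=
  resolvent_approx_haus_general A hA An hAn γ hγ J₀ hJ₀ J hJ hhaus
end

section
/- Let H_1,...,H_m and G_1,...,G_p be real Hilbert spaces, for each k ∈ {1,...,p} and i ∈ {1,...,m} let L_{ki} : H_i → G_k be a bounded linear operator, assume min_{1≤k≤p} Σ_{i=1}^m ‖L_{ki}‖² > 0, and set M_{ij} = Σ_{k=1}^p L_{ki}* L_{kj} for all i, j ∈ {1,...,m}. Then for all (x_1,...,x_m) ∈ H_1 × ... × H_m, Σ_{i=1}^m Σ_{j=1}^m ⟨M_{ij} x_j, x_i⟩ ≥ β Σ_{i=1}^m ‖Σ_{j=1}^m M_{ij} x_j‖² with β = ( Σ_{k=1}^p Σ_{i=1}^m ‖L_{ki}‖² )^{-1}. -/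
/-!
Writing `y_k = Σ_i L_{ki} x_i`, the coupling operator is `T*T` for the block operator
`T x = (y_k)_k`: the quadratic form `Σ_{i,j} ⟪M_{ij} x_j, x_i⟫` is `Σ_k ‖y_k‖²`, and the
`i`-th block of `T*T x` is `Σ_k L_{ki}* y_k`. Cauchy–Schwarz bounds its squared norm by
`(Σ_k ‖L_{ki}‖²) Σ_k ‖y_k‖²`, and summing over `i` gives the claim (trivially so when
`Σ_{k,i} ‖L_{ki}‖² = 0`, where the inverse is `0`).
-/

open ContinuousLinearMap
open scoped RealInnerProductSpace

theorem norm_sum_apply_sq_le {𝕜 E ι : Type*} [NontriviallyNormedField 𝕜]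
    [SeminormedAddCommGroup E] [NormedSpace 𝕜 E] [Fintype ι]
    {F : ι → Type*} [∀ k, SeminormedAddCommGroup (F k)] [∀ k, NormedSpace 𝕜 (F k)]
    (A : ∀ k, F k →L[𝕜] E) (y : ∀ k, F k) :
    ‖∑ k, A k (y k)‖ ^ 2 ≤ (∑ k, ‖A k‖ ^ 2) * ∑ k, ‖y k‖ ^ 2 :=
  calc ‖∑ k, A k (y k)‖ ^ 2 ≤ (∑ k, ‖A k‖ * ‖y k‖) ^ 2 := by
        gcongr
        exact (norm_sum_le _ _).trans (Finset.sum_le_sum fun k _ => (A k).le_opNorm (y k))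
    _ ≤ (∑ k, ‖A k‖ ^ 2) * ∑ k, ‖y k‖ ^ 2 := Finset.sum_mul_sq_le_sq_mul_sq _ _ _

section BlockAdjoint

variable {ι κ : Type*} [Fintype ι] [Fintype κ]
  {H : κ → Type*} [∀ i, NormedAddCommGroup (H i)] [∀ i, InnerProductSpace ℝ (H i)]
  [∀ i, CompleteSpace (H i)]
  {G : ι → Type*} [∀ k, NormedAddCommGroup (G k)] [∀ k, InnerProductSpace ℝ (G k)]
  [∀ k, CompleteSpace (G k)]

theorem sum_sum_adjoint_comp_apply (L : ∀ k i, H i →L[ℝ] G k) (x : ∀ i, H i) (i : κ) :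
    ∑ j, (∑ k, adjoint (L k i) ∘L L k j) (x j) = ∑ k, adjoint (L k i) (∑ j, L k j (x j)) := by
  simp only [sum_apply, comp_apply, map_sum]
  exact Finset.sum_comm

theorem sum_inner_sum_adjoint_apply (L : ∀ k i, H i →L[ℝ] G k) (y : ∀ k, G k)
    (x : ∀ i, H i) :
    ∑ i, ⟪∑ k, adjoint (L k i) (y k), x i⟫ = ∑ k, ⟪y k, ∑ i, L k i (x i)⟫ := by
  simp only [sum_inner, adjoint_inner_left, inner_sum]
  exact Finset.sum_comm

theorem sum_inner_sum_adjoint_comp_apply (L : ∀ k i, H i →L[ℝ] G k) (x : ∀ i, H i) :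
    ∑ i, ∑ j, ⟪(∑ k, adjoint (L k i) ∘L L k j) (x j), x i⟫ = ∑ k, ‖∑ i, L k i (x i)‖ ^ 2 := by
  simp only [← sum_inner, sum_sum_adjoint_comp_apply, sum_inner_sum_adjoint_apply,
    real_inner_self_eq_norm_sq]

theorem sum_norm_sq_sum_adjoint_comp_apply_le (L : ∀ k i, H i →L[ℝ] G k) (x : ∀ i, H i) :
    ∑ i, ‖∑ j, (∑ k, adjoint (L k i) ∘L L k j) (x j)‖ ^ 2
      ≤ (∑ k, ∑ i, ‖L k i‖ ^ 2) * ∑ k, ‖∑ i, L k i (x i)‖ ^ 2 :=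
  calc ∑ i, ‖∑ j, (∑ k, adjoint (L k i) ∘L L k j) (x j)‖ ^ 2
      ≤ ∑ i, (∑ k, ‖adjoint (L k i)‖ ^ 2) * ∑ k, ‖∑ i, L k i (x i)‖ ^ 2 := by
        simp only [sum_sum_adjoint_comp_apply]
        exact Finset.sum_le_sum fun i _ => norm_sum_apply_sq_le _ _
    _ = (∑ k, ∑ i, ‖L k i‖ ^ 2) * ∑ k, ‖∑ i, L k i (x i)‖ ^ 2 := by
        simp only [adjoint.norm_map, ← Finset.sum_mul]
        rw [Finset.sum_comm]

end BlockAdjoint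

theorem composite_linear_coupling_cocoercive_general {m p : ℕ}
    (H : Fin m → Type*) [∀ i, NormedAddCommGroup (H i)]
    [∀ i, InnerProductSpace ℝ (H i)] [∀ i, CompleteSpace (H i)]
    (G : Fin p → Type*) [∀ k, NormedAddCommGroup (G k)]
    [∀ k, InnerProductSpace ℝ (G k)] [∀ k, CompleteSpace (G k)]
    (L : ∀ (k : Fin p) (i : Fin m), H i →L[ℝ] G k)
    (M : ∀ i j : Fin m, H j →L[ℝ] H i)
    (hM : ∀ i j, M i j = ∑ k, (ContinuousLinearMap.adjoint (L k i)).comp (L k j)) :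
    ∀ x : ∀ i, H i,
      (∑ k, ∑ i, ‖L k i‖ ^ 2)⁻¹ * ∑ i, ‖∑ j, M i j (x j)‖ ^ 2
        ≤ ∑ i, ∑ j, ⟪M i j (x j), x i⟫ := by
  intro x
  simp only [hM, sum_inner_sum_adjoint_comp_apply]
  exact inv_mul_le_of_le_mul₀ (by positivity) (by positivity)
    (sum_norm_sq_sum_adjoint_comp_apply_le L x)

/-- Proposition 3.7: for `M_{ij} = Σ_k L_{ki}* L_{kj}`, the cocoercivity
inequality for the linear coupling operators holds with
`β = (Σ_k Σ_i ‖L_{ki}‖²)⁻¹`. -/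
theorem composite_linear_coupling_cocoercive {m p : ℕ} (hp : 0 < p)
    (H : Fin m → Type*) [∀ i, NormedAddCommGroup (H i)]
    [∀ i, InnerProductSpace ℝ (H i)] [∀ i, CompleteSpace (H i)]
    (G : Fin p → Type*) [∀ k, NormedAddCommGroup (G k)]
    [∀ k, InnerProductSpace ℝ (G k)] [∀ k, CompleteSpace (G k)]
    (L : ∀ (k : Fin p) (i : Fin m), H i →L[ℝ] G k)
    -- min_k Σ_i ‖L_{ki}‖² > 0
    (hL : ∀ k, 0 < ∑ i, ‖L k i‖ ^ 2)
    (M : ∀ i j : Fin m, H j →L[ℝ] H i)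
    (hM : ∀ i j, M i j = ∑ k, (ContinuousLinearMap.adjoint (L k i)).comp (L k j)) :
    ∀ x : ∀ i, H i,
      (∑ k, ∑ i, ‖L k i‖ ^ 2)⁻¹ * ∑ i, ‖∑ j, M i j (x j)‖ ^ 2
        ≤ ∑ i, ∑ j, ⟪M i j (x j), x i⟫ :=
  composite_linear_coupling_cocoercive_general H G L M hM
end

section
/- Let H_1,...,H_m and G_1,...,G_p be real Hilbert spaces. For each k ∈ {1,...,p}, let τ_k > 0, let φ_k : G_k → ℝ be a differentiable convex function whose gradient ∇φ_k is τ_k-Lipschitz continuous, and for each i ∈ {1,...,m} let L_{ki} : H_i → G_k be a bounded linear operator. Assume min_{1≤k≤p} Σ_{i=1}^m ‖L_{ki}‖² > 0 and define B_i : H_1 × ... × H_m → H_i by B_i(x_1,...,x_m) = Σ_{k=1}^p L_{ki}* ∇φ_k( Σ_{j=1}^m L_{kj} x_j ). Then the family (B_i)_{1≤i≤m} satisfies the joint cocoercivity inequality with constant β = ( p · max_{1≤k≤p} τ_k Σ_{i=1}^m ‖L_{ki}‖² )^{-1}. -/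
/-!
The gradient of a convex function with `τ`-Lipschitz gradient is `τ⁻¹`-cocoercive
(Baillon–Haddad): comparing the affine lower bound at `x` with the quadratic upper bound at
the gradient step `y - τ⁻¹ (∇φ y - ∇φ x)` gives
`φ x + ⟪∇φ x, y - x⟫ + ‖∇φ y - ∇φ x‖² / (2τ) ≤ φ y`, and adding this to its mirror image is
cocoercivity. For the coupled operators put `d_k = ∇φ_k(u_k) - ∇φ_k(v_k)` with
`u_k = Σ_j L_{kj} x_j`, `v_k = Σ_j L_{kj} y_j`. By adjointness
`Σ_i ⟪B_i x - B_i y, x_i - y_i⟫ = Σ_k ⟪d_k, u_k - v_k⟫ ≥ Σ_k τ_k⁻¹ ‖d_k‖²`, while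
Cauchy–Schwarz over the `p` summands bounds `Σ_i ‖B_i x - B_i y‖²` by
`p Σ_k (Σ_i ‖L_{ki}‖²) ‖d_k‖² ≤ p · max_k (τ_k Σ_i ‖L_{ki}‖²) · Σ_k τ_k⁻¹ ‖d_k‖²`.
-/

open scoped RealInnerProductSpace

section LipschitzGradient

variable {F : Type*} [NormedAddCommGroup F] [InnerProductSpace ℝ F] [CompleteSpace F]
  {φ : F → ℝ}

theorem HasGradientAt.hasDerivAt_comp_add_smul {g x d : F} {t : ℝ}
    (h : HasGradientAt φ g (x + t • d)) :
    HasDerivAt (fun s : ℝ => φ (x + s • d)) ⟪g, d⟫ t := by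
  have hline : HasDerivAt (fun s : ℝ => x + s • d) d t := by
    simpa using ((hasDerivAt_id t).smul_const d).const_add x
  have hcomp := h.hasFDerivAt.comp_hasDerivAt t hline
  simp only [InnerProductSpace.toDual_apply_apply] at hcomp
  exact hcomp

theorem ConvexOn.add_inner_le_of_hasGradientAt (hφ : ConvexOn ℝ Set.univ φ) {g x : F}
    (h : HasGradientAt φ g x) (y : F) :
    φ x + ⟪g, y - x⟫ ≤ φ y := by
  have hline : ConvexOn ℝ Set.univ (fun t : ℝ => φ (x + t • (y - x))) := by
    simpa [Function.comp_def, AffineMap.lineMap_apply, add_comm] using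
      hφ.comp_affineMap (AffineMap.lineMap x y)
  have hderiv : HasDerivAt (fun t : ℝ => φ (x + t • (y - x))) ⟪g, y - x⟫ 0 :=
    HasGradientAt.hasDerivAt_comp_add_smul (by simpa using h)
  have := hline.le_slope_of_hasDerivAt (Set.mem_univ 0) (Set.mem_univ 1) one_pos hderiv
  simp only [slope_def_field, zero_smul, add_zero, one_smul, add_sub_cancel, sub_zero,
    div_one] at this
  linarith

variable {g : F → F} {τ : ℝ}

theorem le_add_inner_add_sq_of_lipschitz_gradient (hg : ∀ u, HasGradientAt φ (g u) u)
    (hLip : ∀ u v, ‖g u - g v‖ ≤ τ * ‖u - v‖) (x y : F) :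
    φ y ≤ φ x + ⟪g x, y - x⟫ + τ / 2 * ‖y - x‖ ^ 2 := by
  set d := y - x
  -- the gap between `φ` and its quadratic model along the segment is nonincreasing
  let gap : ℝ → ℝ := fun t => φ (x + t • d) - t * ⟪g x, d⟫ - τ / 2 * t ^ 2 * ‖d‖ ^ 2
  have hgap : ∀ t, HasDerivAt gap (⟪g (x + t • d) - g x, d⟫ - τ * t * ‖d‖ ^ 2) t := by
    intro t
    have hquad : HasDerivAt (fun s : ℝ => τ / 2 * s ^ 2 * ‖d‖ ^ 2) (τ * t * ‖d‖ ^ 2) t := by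
      exact (((hasDerivAt_pow 2 t).const_mul (τ / 2)).mul_const (‖d‖ ^ 2)).congr_deriv
        (by ring)
    refine ((((hg _).hasDerivAt_comp_add_smul).sub
      ((hasDerivAt_id t).mul_const ⟪g x, d⟫)).sub hquad).congr_deriv ?_
    simp [inner_sub_left]
  have hslope : ∀ t ∈ interior (Set.Icc (0 : ℝ) 1), deriv gap t ≤ 0 := by
    intro t ht
    rw [interior_Icc] at ht
    rw [(hgap t).deriv, sub_nonpos]
    calc ⟪g (x + t • d) - g x, d⟫ ≤ ‖g (x + t • d) - g x‖ * ‖d‖ := real_inner_le_norm _ _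
      _ ≤ τ * ‖x + t • d - x‖ * ‖d‖ := by gcongr; exact hLip _ _
      _ = τ * t * ‖d‖ ^ 2 := by
        rw [add_sub_cancel_left, norm_smul, Real.norm_of_nonneg ht.1.le]; ring
  have hanti : AntitoneOn gap (Set.Icc 0 1) :=
    antitoneOn_of_deriv_nonpos (convex_Icc 0 1)
      (fun t _ => (hgap t).continuousAt.continuousWithinAt)
      (fun t _ => (hgap t).differentiableAt.differentiableWithinAt) hslope
  have h01 := hanti (by simp) (by simp) zero_le_one
  simp only [gap, zero_smul, add_zero, one_smul, d, add_sub_cancel] at h01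
  linarith

theorem ConvexOn.add_inner_add_sq_norm_sub_le_of_lipschitz_gradient
    (hφ : ConvexOn ℝ Set.univ φ) (hg : ∀ u, HasGradientAt φ (g u) u) (hτ : 0 < τ)
    (hLip : ∀ u v, ‖g u - g v‖ ≤ τ * ‖u - v‖) (x y : F) :
    φ x + ⟪g x, y - x⟫ + τ⁻¹ / 2 * ‖g y - g x‖ ^ 2 ≤ φ y := by
  set w := τ⁻¹ • (g y - g x)
  have hlower := hφ.add_inner_le_of_hasGradientAt (hg x) (y - w)
  have hupper := le_add_inner_add_sq_of_lipschitz_gradient hg hLip y (y - w)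
  have hstep : y - w - x = (y - x) - w := by abel
  rw [hstep, inner_sub_right] at hlower
  rw [sub_sub_cancel_left, inner_neg_right, norm_neg] at hupper
  have hw : ⟪g y, w⟫ - ⟪g x, w⟫ - τ / 2 * ‖w‖ ^ 2 = τ⁻¹ / 2 * ‖g y - g x‖ ^ 2 := by
    rw [← inner_sub_left, inner_smul_right, real_inner_self_eq_norm_sq, norm_smul,
      Real.norm_of_nonneg (inv_nonneg.2 hτ.le)]
    field_simp
    ring
  linarith

theorem ConvexOn.inv_mul_norm_sq_le_inner_of_lipschitz_gradient
    (hφ : ConvexOn ℝ Set.univ φ) (hg : ∀ u, HasGradientAt φ (g u) u) (hτ : 0 < τ)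
    (hLip : ∀ u v, ‖g u - g v‖ ≤ τ * ‖u - v‖) (u v : F) :
    τ⁻¹ * ‖g u - g v‖ ^ 2 ≤ ⟪g u - g v, u - v⟫ := by
  have huv := hφ.add_inner_add_sq_norm_sub_le_of_lipschitz_gradient hg hτ hLip u v
  have hvu := hφ.add_inner_add_sq_norm_sub_le_of_lipschitz_gradient hg hτ hLip v u
  rw [norm_sub_rev] at huv
  have hsum : ⟪g u - g v, u - v⟫ = -⟪g u, v - u⟫ - ⟪g v, u - v⟫ := by
    rw [inner_sub_left, ← inner_neg_right, neg_sub]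
  linarith

end LipschitzGradient

section Coupling

open ContinuousLinearMap

variable {ι κ : Type*} [Fintype ι] [Fintype κ]
  {E : ι → Type*} [∀ i, NormedAddCommGroup (E i)] [∀ i, InnerProductSpace ℝ (E i)]
  [∀ i, CompleteSpace (E i)]
  {F : κ → Type*} [∀ k, NormedAddCommGroup (F k)] [∀ k, InnerProductSpace ℝ (F k)]
  [∀ k, CompleteSpace (F k)]

theorem sum_inner_sum_adjoint (L : ∀ k i, E i →L[ℝ] F k) (d : ∀ k, F k) (z : ∀ i, E i) :
    ∑ i, ⟪∑ k, adjoint (L k i) (d k), z i⟫ = ∑ k, ⟪d k, ∑ i, L k i (z i)⟫ := by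
  simp only [sum_inner, inner_sum, adjoint_inner_left]
  exact Finset.sum_comm

theorem sum_norm_sq_sum_adjoint_le (L : ∀ k i, E i →L[ℝ] F k) (d : ∀ k, F k) :
    ∑ i, ‖∑ k, adjoint (L k i) (d k)‖ ^ 2 ≤
      Fintype.card κ * ∑ k, (∑ i, ‖L k i‖ ^ 2) * ‖d k‖ ^ 2 := by
  have hterm : ∀ i, ‖∑ k, adjoint (L k i) (d k)‖ ^ 2 ≤
      Fintype.card κ * ∑ k, ‖L k i‖ ^ 2 * ‖d k‖ ^ 2 := fun i =>
    calc ‖∑ k, adjoint (L k i) (d k)‖ ^ 2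
        ≤ (∑ k, ‖adjoint (L k i) (d k)‖) ^ 2 := by gcongr; exact norm_sum_le _ _
      _ ≤ Fintype.card κ * ∑ k, ‖adjoint (L k i) (d k)‖ ^ 2 := sq_sum_le_card_mul_sum_sq
      _ ≤ Fintype.card κ * ∑ k, ‖L k i‖ ^ 2 * ‖d k‖ ^ 2 := by
        gcongr with k
        rw [← mul_pow, ← adjoint.norm_map]
        gcongr
        exact le_opNorm _ _
  calc ∑ i, ‖∑ k, adjoint (L k i) (d k)‖ ^ 2
      ≤ ∑ i, Fintype.card κ * ∑ k, ‖L k i‖ ^ 2 * ‖d k‖ ^ 2 :=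
        Finset.sum_le_sum fun i _ => hterm i
    _ = Fintype.card κ * ∑ k, (∑ i, ‖L k i‖ ^ 2) * ‖d k‖ ^ 2 := by
      simp only [← Finset.mul_sum, Finset.sum_mul]
      rw [Finset.sum_comm]

theorem sum_norm_sq_sum_adjoint_le_of_cocoercive (L : ∀ k i, E i →L[ℝ] F k)
    {τ : κ → ℝ} (hτ : ∀ k, 0 < τ k) {M : ℝ} (hM : ∀ k, τ k * ∑ i, ‖L k i‖ ^ 2 ≤ M)
    {d w : ∀ k, F k} (hco : ∀ k, (τ k)⁻¹ * ‖d k‖ ^ 2 ≤ ⟪d k, w k⟫) :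
    ∑ i, ‖∑ k, adjoint (L k i) (d k)‖ ^ 2 ≤ Fintype.card κ * M * ∑ k, ⟪d k, w k⟫ := by
  have hterm : ∀ k, (∑ i, ‖L k i‖ ^ 2) * ‖d k‖ ^ 2 ≤ M * ⟪d k, w k⟫ := fun k =>
    calc (∑ i, ‖L k i‖ ^ 2) * ‖d k‖ ^ 2
        = (τ k * ∑ i, ‖L k i‖ ^ 2) * ((τ k)⁻¹ * ‖d k‖ ^ 2) := by field_simp [(hτ k).ne']
      _ ≤ M * ⟪d k, w k⟫ :=
        mul_le_mul (hM k) (hco k) (mul_nonneg (inv_nonneg.2 (hτ k).le) (sq_nonneg _))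
          ((mul_nonneg (hτ k).le (by positivity)).trans (hM k))
  calc ∑ i, ‖∑ k, adjoint (L k i) (d k)‖ ^ 2
      ≤ Fintype.card κ * ∑ k, (∑ i, ‖L k i‖ ^ 2) * ‖d k‖ ^ 2 := sum_norm_sq_sum_adjoint_le L d
    _ ≤ Fintype.card κ * ∑ k, M * ⟪d k, w k⟫ :=
      mul_le_mul_of_nonneg_left (Finset.sum_le_sum fun k _ => hterm k) (Nat.cast_nonneg _)
    _ = Fintype.card κ * M * ∑ k, ⟪d k, w k⟫ := by rw [← Finset.mul_sum, mul_assoc]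

end Coupling

theorem gradient_coupling_cocoercive_general {m p : ℕ} (hp : 0 < p)
    (H : Fin m → Type*) [∀ i, NormedAddCommGroup (H i)]
    [∀ i, InnerProductSpace ℝ (H i)] [∀ i, CompleteSpace (H i)]
    (G : Fin p → Type*) [∀ k, NormedAddCommGroup (G k)]
    [∀ k, InnerProductSpace ℝ (G k)] [∀ k, CompleteSpace (G k)]
    (τ : Fin p → ℝ) (hτ : ∀ k, 0 < τ k)
    (φ : ∀ k, G k → ℝ) (hφconv : ∀ k, ConvexOn ℝ Set.univ (φ k))
    -- `gφ k` is the gradient of `φ_k`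
    (gφ : ∀ k, G k → G k) (hgφ : ∀ k (u : G k), HasGradientAt (φ k) (gφ k u) u)
    -- `∇φ_k` is `τ_k`-Lipschitz continuous
    (hLip : ∀ k, ∀ u v : G k, ‖gφ k u - gφ k v‖ ≤ τ k * ‖u - v‖)
    (L : ∀ (k : Fin p) (i : Fin m), H i →L[ℝ] G k)
    (B : ∀ i : Fin m, (∀ j, H j) → H i)
    (hB : ∀ i (x : ∀ j, H j),
      B i x = ∑ k, ContinuousLinearMap.adjoint (L k i) (gφ k (∑ j, L k j (x j))))
    (β : ℝ)
    (hβ : β = (p * Finset.univ.sup' ⟨⟨0, hp⟩, Finset.mem_univ _⟩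
        (fun k => τ k * ∑ i, ‖L k i‖ ^ 2))⁻¹) :
    ∀ x y : ∀ j, H j,
      β * ∑ i, ‖B i x - B i y‖ ^ 2 ≤ ∑ i, ⟪B i x - B i y, x i - y i⟫ := by
  intro x y
  set M := Finset.univ.sup' ⟨⟨0, hp⟩, Finset.mem_univ _⟩ (fun k => τ k * ∑ i, ‖L k i‖ ^ 2)
  have hMk : ∀ k, τ k * ∑ i, ‖L k i‖ ^ 2 ≤ M := fun k =>
    Finset.le_sup' (fun k => τ k * ∑ i, ‖L k i‖ ^ 2) (Finset.mem_univ k)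
  have hM : 0 ≤ M := (mul_nonneg (hτ _).le (by positivity)).trans (hMk ⟨0, hp⟩)
  set u := fun k => ∑ j, L k j (x j)
  set v := fun k => ∑ j, L k j (y j)
  set d := fun k => gφ k (u k) - gφ k (v k)
  have hBd : ∀ i, B i x - B i y = ∑ k, ContinuousLinearMap.adjoint (L k i) (d k) :=
    fun i => by
    simp only [hB, d, map_sub, Finset.sum_sub_distrib, u, v]
  have hco : ∀ k, (τ k)⁻¹ * ‖d k‖ ^ 2 ≤ ⟪d k, u k - v k⟫ := fun k =>
    (hφconv k).inv_mul_norm_sq_le_inner_of_lipschitz_gradient (hgφ k) (hτ k) (hLip k) _ _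
  have hinner : ∑ i, ⟪B i x - B i y, x i - y i⟫ = ∑ k, ⟪d k, u k - v k⟫ := by
    have hadj := sum_inner_sum_adjoint L d (x - y)
    simp only [Pi.sub_apply, map_sub, Finset.sum_sub_distrib] at hadj
    simpa only [hBd] using hadj
  have hinner_nonneg : 0 ≤ ∑ k, ⟪d k, u k - v k⟫ := Finset.sum_nonneg fun k _ =>
    (mul_nonneg (inv_nonneg.2 (hτ k).le) (sq_nonneg _)).trans (hco k)
  have hnorm : ∑ i, ‖B i x - B i y‖ ^ 2 ≤ p * M * ∑ k, ⟪d k, u k - v k⟫ := by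
    simpa only [hBd, Fintype.card_fin] using
      sum_norm_sq_sum_adjoint_le_of_cocoercive L hτ hMk hco
  rw [hinner, hβ]
  exact inv_mul_le_of_le_mul₀ (mul_nonneg p.cast_nonneg hM) hinner_nonneg hnorm

/-- Corollary 3.11: if each `φ_k : G_k → ℝ` is convex with `τ_k`-Lipschitz
gradient, then the coupling operators
`B_i : (x_j)_j ↦ Σ_k L_{ki}* ∇φ_k(Σ_j L_{kj} x_j)` satisfy the joint
cocoercivity inequality with `β = (p max_k τ_k Σ_i ‖L_{ki}‖²)⁻¹`. -/
theorem gradient_coupling_cocoercive {m p : ℕ} (hp : 0 < p)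
    (H : Fin m → Type*) [∀ i, NormedAddCommGroup (H i)]
    [∀ i, InnerProductSpace ℝ (H i)] [∀ i, CompleteSpace (H i)]
    (G : Fin p → Type*) [∀ k, NormedAddCommGroup (G k)]
    [∀ k, InnerProductSpace ℝ (G k)] [∀ k, CompleteSpace (G k)]
    (τ : Fin p → ℝ) (hτ : ∀ k, 0 < τ k)
    (φ : ∀ k, G k → ℝ) (hφconv : ∀ k, ConvexOn ℝ Set.univ (φ k))
    -- `gφ k` is the gradient of `φ_k`
    (gφ : ∀ k, G k → G k) (hgφ : ∀ k (u : G k), HasGradientAt (φ k) (gφ k u) u)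
    -- `∇φ_k` is `τ_k`-Lipschitz continuous
    (hLip : ∀ k, ∀ u v : G k, ‖gφ k u - gφ k v‖ ≤ τ k * ‖u - v‖)
    (L : ∀ (k : Fin p) (i : Fin m), H i →L[ℝ] G k)
    -- min_k Σ_i ‖L_{ki}‖² > 0
    (hL : ∀ k, 0 < ∑ i, ‖L k i‖ ^ 2)
    (B : ∀ i : Fin m, (∀ j, H j) → H i)
    (hB : ∀ i (x : ∀ j, H j),
      B i x = ∑ k, ContinuousLinearMap.adjoint (L k i) (gφ k (∑ j, L k j (x j))))
    (β : ℝ)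
    (hβ : β = (p * Finset.univ.sup' ⟨⟨0, hp⟩, Finset.mem_univ _⟩
        (fun k => τ k * ∑ i, ‖L k i‖ ^ 2))⁻¹) :
    ∀ x y : ∀ j, H j,
      β * ∑ i, ‖B i x - B i y‖ ^ 2 ≤ ∑ i, ⟪B i x - B i y, x i - y i⟫ :=
  gradient_coupling_cocoercive_general hp H G τ hτ φ hφconv gφ hgφ hLip L B hB β hβ
end
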